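/- Let α, β, γ, t be integers with 1 ≤ α ≤ β ≤ γ < 2(α+β), with α+β+γ divisible by 3, and with t > (α+β+γ)/3. Set σ = α+β+γ and s = (2/3)σ + t − 2, and for d ∈ ℕ let h(d) be the number of triples (a,b,c) ∈ ℕ³ with a+b+c = d, a < α+t, b < β+t, c < γ+t, and not (a ≥ α and b ≥ β and c ≥ γ). Then h(d) < h(d+1) for every integer d with 0 ≤ d < s. -/
import Mathlib

open Finset

/-- The Hilbert function of `R/I` where
`I = (x^{α+t}, y^{β+t}, z^{γ+t}, x^α y^β z^γ) ⊂ K[x,y,z]`: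
`hilb α β γ t d` is the number of triples `(a,b,c) ∈ ℕ³` with `a+b+c = d`,
`a < α+t`, `b < β+t`, `c < γ+t`, and not (`a ≥ α` and `b ≥ β` and `c ≥ γ`). -/
def hilb (α β γ t d : ℕ) : ℕ :=
  ((Finset.range (α + t) ×ˢ Finset.range (β + t) ×ˢ Finset.range (γ + t)).filter
    (fun p => p.1 + p.2.1 + p.2.2 = d ∧ ¬(α ≤ p.1 ∧ β ≤ p.2.1 ∧ γ ≤ p.2.2))).card

/-- Number of pairs `(b,c)` with `b < Q`, `c < R`, `a + b + c = d`. -/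
private def cnt2 (Q R a d : ℕ) : ℕ :=
  ((Finset.range Q ×ˢ Finset.range R).filter (fun p => a + p.1 + p.2 = d)).card

private lemma cnt2_eq (Q R a d : ℕ) :
    cnt2 Q R a d = (d + 1 - a) - (d + 1 - a - Q) - (d + 1 - a - R) := by
  rw [cnt2, ← Nat.card_Ico (d + 1 - a - R) ((d + 1 - a) - (d + 1 - a - Q))]
  apply Finset.card_bij' (fun p _ => p.1) (fun b _ => (b, d - a - b))
  · intro p hp
    simp only [Finset.mem_filter, Finset.mem_product, Finset.mem_range] at hp
    simp only [Finset.mem_Ico]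
    omega
  · intro b hb
    simp only [Finset.mem_Ico] at hb
    simp only [Finset.mem_filter, Finset.mem_product, Finset.mem_range]
    omega
  · intro p hp
    simp only [Finset.mem_filter, Finset.mem_product, Finset.mem_range] at hp
    ext <;> simp
    omega
  · intro b _
    simp

/-- Number of triples `(a,b,c)` with `a < P`, `b < Q`, `c < R`, `a + b + c = d`. -/
private def cnt3 (P Q R d : ℕ) : ℕ :=
  ((Finset.range P ×ˢ Finset.range Q ×ˢ Finset.range R).filter
    (fun p => p.1 + p.2.1 + p.2.2 = d)).card

private lemma cnt3_eq_sum (P Q R d : ℕ) :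
    cnt3 P Q R d = ∑ a ∈ Finset.range P, cnt2 Q R a d := by
  rw [cnt3, Finset.card_filter, Finset.sum_product]
  refine Finset.sum_congr rfl (fun a _ => ?_)
  rw [cnt2, Finset.card_filter]

private lemma cnt3_succ (P Q R d : ℕ) (hP : 1 ≤ P) :
    cnt3 P Q R (d + 1) + ((d + 2 - P) - (d + 2 - P - Q) - (d + 2 - P - R))
      = cnt3 P Q R d + ((d + 2) - (d + 2 - Q) - (d + 2 - R)) := by
  obtain ⟨P', rfl⟩ : ∃ P', P = P' + 1 := ⟨P - 1, by omega⟩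
  rw [cnt3_eq_sum, cnt3_eq_sum, Finset.sum_range_succ' (fun a => cnt2 Q R a (d + 1)) P',
    Finset.sum_range_succ (fun a => cnt2 Q R a d) P']
  have h1 : ∀ i, cnt2 Q R (i + 1) (d + 1) = cnt2 Q R i d := by
    intro i
    rw [cnt2_eq, cnt2_eq]
    omega
  have h2 : cnt2 Q R 0 (d + 1) = (d + 2) - (d + 2 - Q) - (d + 2 - R) := by
    rw [cnt2_eq]; omega
  have h3 : cnt2 Q R P' d = (d + 2 - (P' + 1)) - (d + 2 - (P' + 1) - Q)
      - (d + 2 - (P' + 1) - R) := by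
    rw [cnt2_eq]
    omega
  simp only [h1, h2, h3]
  omega

private lemma cnt3_zero (P Q R : ℕ) (hP : 1 ≤ P) (hQ : 1 ≤ Q) (hR : 1 ≤ R) :
    cnt3 P Q R 0 = 1 := by
  rw [cnt3]
  rw [show ((Finset.range P ×ˢ Finset.range Q ×ˢ Finset.range R).filter
      (fun p => p.1 + p.2.1 + p.2.2 = 0)) = {((0 : ℕ), (0 : ℕ), (0 : ℕ))} from ?_]
  · simp
  · ext ⟨a, b, c⟩
    simp only [Finset.mem_filter, Finset.mem_product, Finset.mem_range,
      Finset.mem_singleton, Prod.mk.injEq]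
    omega

/-- The "upper corner" count: triples with all coordinates above thresholds. -/
private def cnt3U (α β γ t d : ℕ) : ℕ :=
  ((Finset.range (α + t) ×ˢ Finset.range (β + t) ×ˢ Finset.range (γ + t)).filter
    (fun p => p.1 + p.2.1 + p.2.2 = d ∧ α ≤ p.1 ∧ β ≤ p.2.1 ∧ γ ≤ p.2.2)).card

private lemma cnt3U_eq (α β γ t d : ℕ) (h : α + β + γ ≤ d) :
    cnt3U α β γ t d = cnt3 t t t (d - (α + β + γ)) := by
  rw [cnt3U, cnt3]
  apply Finset.card_bij' (fun p _ => (p.1 - α, p.2.1 - β, p.2.2 - γ))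
    (fun q _ => (q.1 + α, q.2.1 + β, q.2.2 + γ))
  · intro p hp
    simp only [Finset.mem_filter, Finset.mem_product, Finset.mem_range] at hp ⊢
    omega
  · intro q hq
    simp only [Finset.mem_filter, Finset.mem_product, Finset.mem_range] at hq ⊢
    omega
  · intro p hp
    simp only [Finset.mem_filter, Finset.mem_product, Finset.mem_range] at hp
    ext <;> simp <;> omega
  · intro q hq
    simp only [Finset.mem_filter, Finset.mem_product, Finset.mem_range] at hq
    ext <;> simp

private lemma cnt3U_zero (α β γ t d : ℕ) (h : d < α + β + γ) :
    cnt3U α β γ t d = 0 := by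
  rw [cnt3U, Finset.card_eq_zero]
  ext ⟨a, b, c⟩
  simp only [Finset.mem_filter, Finset.mem_product, Finset.mem_range,
    Finset.notMem_empty, iff_false, not_and]
  intro _ _ _ h4
  omega

private lemma hilb_split (α β γ t d : ℕ) :
    hilb α β γ t d + cnt3U α β γ t d = cnt3 (α + t) (β + t) (γ + t) d := by
  rw [hilb, cnt3U, cnt3]
  have e1 : ∀ (P : (ℕ × ℕ × ℕ) → Prop) [DecidablePred P],
      ((Finset.range (α + t) ×ˢ Finset.range (β + t) ×ˢ Finset.range (γ + t)).filter
        (fun p => p.1 + p.2.1 + p.2.2 = d ∧ P p))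
      = ((Finset.range (α + t) ×ˢ Finset.range (β + t) ×ˢ Finset.range (γ + t)).filter
        (fun p => p.1 + p.2.1 + p.2.2 = d)).filter P := by
    intro P _
    rw [Finset.filter_filter]
  rw [e1 (fun p => ¬(α ≤ p.1 ∧ β ≤ p.2.1 ∧ γ ≤ p.2.2)),
    e1 (fun p => α ≤ p.1 ∧ β ≤ p.2.1 ∧ γ ≤ p.2.2), add_comm]
  exact Finset.card_filter_add_card_filter_not _

/-- The Hilbert function strictly increases in degrees `0 ≤ d < s`, where
`s = (2/3)(α+β+γ) + t - 2` is encoded by `3(s+2) = 2(α+β+γ) + 3t`. -/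
theorem hilb_strict_increase (α β γ t s : ℕ)
    (hα : 1 ≤ α) (hαβ : α ≤ β) (hβγ : β ≤ γ) (hγ : γ < 2 * (α + β))
    (h3 : 3 ∣ (α + β + γ)) (ht : α + β + γ < 3 * t)
    (hs : 3 * (s + 2) = 2 * (α + β + γ) + 3 * t) :
    ∀ d : ℕ, d < s → hilb α β γ t d < hilb α β γ t (d + 1) := by
  intro d hd
  obtain ⟨m, hm⟩ := h3
  have ht1 : 1 ≤ t := by omega
  have E1 := hilb_split α β γ t d
  have E2 := hilb_split α β γ t (d + 1)
  have E3 := cnt3_succ (α + t) (β + t) (γ + t) d (by omega)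
  -- case analysis on position of d relative to σ = α+β+γ
  rcases lt_trichotomy (d + 1) (α + β + γ) with hc | hc | hc
  · have U1 : cnt3U α β γ t d = 0 := cnt3U_zero _ _ _ _ _ (by omega)
    have U2 : cnt3U α β γ t (d + 1) = 0 := cnt3U_zero _ _ _ _ _ (by omega)
    omega
  · have U1 : cnt3U α β γ t d = 0 := cnt3U_zero _ _ _ _ _ (by omega)
    have U2 : cnt3U α β γ t (d + 1) = cnt3 t t t 0 := by
      rw [cnt3U_eq _ _ _ _ _ (by omega), hc, Nat.sub_self]
    rw [cnt3_zero t t t ht1 ht1 ht1] at U2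
    omega
  · have U1 : cnt3U α β γ t d = cnt3 t t t (d - (α + β + γ)) :=
      cnt3U_eq _ _ _ _ _ (by omega)
    have U2 : cnt3U α β γ t (d + 1) = cnt3 t t t (d - (α + β + γ) + 1) := by
      rw [cnt3U_eq _ _ _ _ _ (by omega)]
      congr 1
      omega
    have E4 := cnt3_succ t t t (d - (α + β + γ)) ht1
    omega
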